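/- Let m ≥ 4 be an integer, let π be a permutation of {0,1,…,m−3}, and let e_i, f_i ∈ Z_2 for 0 ≤ i ≤ m−3. Let a = Ψ_{2^{m−2}−1}(g^0) and b = Ψ_{2^{m−2}−1}(g^1), sequences of length N = 2^{m−1}+2. Then for every integer τ with 1 ≤ τ ≤ 2^{m−2}, the aperiodic autocorrelation sum vanishes: ρ_a(τ)+ρ_b(τ) = 0. -/

import Mathlib

open Finset

/-- The `j`-th binary digit of the integer `i`, as an element of `ZMod 2`. -/
def bitZ (i j : ℕ) : ZMod 2 := ((i / 2 ^ j) % 2 : ℕ)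

/-- The generalized Boolean function `ζ^d` of the construction (in variables `x_0,…,x_{m-3}`). -/
def zeta (m : ℕ) (π : ℕ → ℕ) (d : ZMod 2) (x : ℕ → ZMod 2) : ZMod 2 :=
  (∑ α ∈ Finset.range (m - 3), x (π α) * x (π (α + 1))) + d * x (π (m - 3))

/-- The generalized Boolean function `η^d` of the construction. -/
def eta (m : ℕ) (π : ℕ → ℕ) (d : ZMod 2) (x : ℕ → ZMod 2) : ZMod 2 :=
  (∑ α ∈ Finset.range (m - 3), (1 - x (π α)) * (1 - x (π (α + 1))))
    + (1 - d) * x (π (m - 3))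

/-- The generalized Boolean function `g^d` of the construction (in `m` variables). -/
def gbf (m : ℕ) (π : ℕ → ℕ) (e f : ℕ → ZMod 2) (d : ZMod 2) (x : ℕ → ZMod 2) : ZMod 2 :=
  x (m - 2) * (1 - x (m - 1)) * zeta m π d x
    + (1 - x (m - 2)) * x (m - 1) * eta m π d x
    + d * (1 - x (m - 2)) * (1 - x (m - 1))
    + x (m - 2) * x (m - 1)
    + (∑ i ∈ Finset.range (m - 2), e i * x i)
    + (∑ i ∈ Finset.range (m - 2), f i * (1 - x i))

/-- The ±1 sequence `Ψ(F)` associated with a generalized Boolean function: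
its `i`-th entry is `(-1)^{F(r_{i,0}, r_{i,1}, …)}`. -/
def Psi (F : (ℕ → ZMod 2) → ZMod 2) (i : ℕ) : ℤ := (-1) ^ (F (bitZ i)).val

/-- The truncated sequence `Ψ_L(F)`, obtained by deleting the first (and last) `L`
entries of `Ψ(F)`: its `k`-th entry is the `(L+k)`-th entry of `Ψ(F)`. -/
def PsiT (F : (ℕ → ZMod 2) → ZMod 2) (L : ℕ) (k : ℕ) : ℤ := Psi F (L + k)

/-- Aperiodic autocorrelation of a length-`N` sequence `a` at time shift `τ`. -/
def rho (N : ℕ) (a : ℕ → ℤ) (τ : ℕ) : ℤ :=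
  ∑ k ∈ Finset.range (N - τ), a k * a (k + τ)

/-!
Write `n = 2 ^ (m - 2)`. The truncated sequence `Ψ_{n-1}(g^d)`, of length `2n + 2`, is the entry
`Ψ(g^d)(n - 1)`, the block `Ψ(g^d)(n + t)` for `t < 2n`, and the entry `Ψ(g^d)(3n)`. As a function
of the bits `y` of `t`, `g^d(n + t)` is the Davis–Jedwab function of the path
`m - 2, π 0, …, π (m - 3)` (quadratic form of the path, plus an affine form, plus
`d · y_{π (m-3)}`), so for `d = 0, 1` the middle blocks form a Golay complementary pair. Their
autocorrelations cancel through the classical sign-reversing involution: if `t` and `t + τ`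
disagree at the end of the path, the two values of `d` cancel; otherwise flip, in both, the bit
following the last path position where they differ, which preserves the shift `τ` and changes the
exponent by exactly `1`.

For `τ ≤ n` the other terms of `ρ_a(τ) + ρ_b(τ)` are the two products involving the end entries.
With `w = τ - 1`, the exponents at `n - 1, n + w` and at `3n - τ, 3n` differ by `w_{π (m-3)}`, and
the former changes by `1 + w_{π (m-3)}` from `d = 0` to `d = 1`, so these four terms cancel too.
-/

namespace Nat

lemma xor_two_pow_eq (t b : ℕ) :
    t ^^^ 2 ^ b = 2 ^ b * (t / 2 ^ b ^^^ 1) + t % 2 ^ b := by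
  apply Nat.eq_of_testBit_eq
  intro j
  rw [Nat.testBit_two_pow_mul_add _ (Nat.mod_lt _ (Nat.two_pow_pos b))]
  split_ifs with hj
  · simp [hj, hj.ne']
  · have : j = j - b + b := (Nat.sub_add_cancel (not_lt.mp hj)).symm
    rw [Nat.testBit_xor, Nat.testBit_xor, Nat.testBit_div_two_pow, ← this,
      ← Nat.pow_zero 2, Nat.testBit_two_pow, Nat.testBit_two_pow]
    grind

lemma xor_two_pow_of_testBit_false {t b : ℕ} (h : t.testBit b = false) :
    t ^^^ 2 ^ b = t + 2 ^ b := by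
  have heven : Even (t / 2 ^ b) := by
    rw [Nat.even_iff, ← Nat.toNat_testBit, h, Bool.toNat_false]
  rw [xor_two_pow_eq, Nat.xor_one_of_even heven, mul_add, mul_one]
  have := Nat.div_add_mod t (2 ^ b)
  omega

lemma xor_two_pow_add_two_pow_of_testBit_true {t b : ℕ} (h : t.testBit b = true) :
    (t ^^^ 2 ^ b) + 2 ^ b = t := by
  have hodd : Odd (t / 2 ^ b) := by
    rw [Nat.odd_iff, ← Nat.toNat_testBit, h, Bool.toNat_true]
  rw [xor_two_pow_eq, Nat.xor_one_of_odd hodd, Nat.mul_sub, mul_one]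
  have := Nat.div_add_mod t (2 ^ b)
  have : 2 ^ b ≤ 2 ^ b * (t / 2 ^ b) := Nat.le_mul_of_pos_right _ hodd.pos
  omega

lemma xor_two_pow_add_of_testBit_eq {t τ b : ℕ} (h : t.testBit b = (t + τ).testBit b) :
    (t ^^^ 2 ^ b) + τ = (t + τ) ^^^ 2 ^ b := by
  cases ht : t.testBit b
  · rw [xor_two_pow_of_testBit_false ht, xor_two_pow_of_testBit_false (ht ▸ h).symm]
    omega
  · have h1 := xor_two_pow_add_two_pow_of_testBit_true ht
    have h2 := xor_two_pow_add_two_pow_of_testBit_true (ht ▸ h).symm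
    omega

lemma exists_lt_testBit_of_ne_zero_of_lt_two_pow {D r : ℕ} (hD : D ≠ 0) (hDr : D < 2 ^ r) :
    ∃ j < r, D.testBit j := by
  obtain ⟨j, hj⟩ := Nat.exists_testBit_of_ne_zero hD
  exact ⟨j, lt_of_not_ge fun hrj => by
    simp [Nat.testBit_lt_two_pow (hDr.trans_le (Nat.pow_le_pow_right two_pos hrj))] at hj, hj⟩

end Nat

lemma bitZ_eq_toNat_testBit (i j : ℕ) : bitZ i j = ((i.testBit j).toNat : ZMod 2) := by
  rw [bitZ, Nat.toNat_testBit]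

lemma bitZ_xor (x y : ℕ) : bitZ (x ^^^ y) = bitZ x + bitZ y := by
  ext j
  simp only [Pi.add_apply, bitZ_eq_toNat_testBit, Nat.testBit_xor]
  cases x.testBit j <;> cases y.testBit j <;> decide

lemma bitZ_two_pow (b : ℕ) : bitZ (2 ^ b) = Pi.single b 1 := by
  ext j
  rw [bitZ_eq_toNat_testBit, Nat.testBit_two_pow, Pi.single_apply]
  by_cases h : j = b
  · simp [h]
  · simp [h, Ne.symm h]

lemma bitZ_two_pow_mul_add_of_lt {s z : ℕ} (hz : z < 2 ^ s) (q : ℕ) {j : ℕ} (hj : j < s) :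
    bitZ (2 ^ s * q + z) j = bitZ z j := by
  simp only [bitZ_eq_toNat_testBit, Nat.testBit_two_pow_mul_add q hz, if_pos hj]

lemma bitZ_two_pow_mul_add_self {s z : ℕ} (hz : z < 2 ^ s) (q : ℕ) :
    bitZ (2 ^ s * q + z) s = bitZ q 0 := by
  simp only [bitZ_eq_toNat_testBit, Nat.testBit_two_pow_mul_add q hz, lt_irrefl, if_false,
    Nat.sub_self]

lemma bitZ_two_pow_mul_add_succ {s z : ℕ} (hz : z < 2 ^ s) (q : ℕ) :
    bitZ (2 ^ s * q + z) (s + 1) = bitZ q 1 := by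
  simp only [bitZ_eq_toNat_testBit, Nat.testBit_two_pow_mul_add q hz,
    if_neg (Nat.not_succ_lt_self), Nat.add_sub_cancel_left]

lemma bitZ_two_pow_sub_one_sub {s w j : ℕ} (hw : w < 2 ^ s) (hj : j < s) :
    bitZ (2 ^ s - 1 - w) j = 1 - bitZ w j := by
  rw [Nat.sub_sub, bitZ_eq_toNat_testBit, bitZ_eq_toNat_testBit, Nat.add_comm,
    Nat.testBit_two_pow_sub_succ hw, decide_eq_true hj]
  cases w.testBit j <;> decide

def chi (s : ZMod 2) : ℤ := (-1) ^ s.val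

lemma chi_add (s t : ZMod 2) : chi (s + t) = chi s * chi t := by
  revert s t; decide

lemma chi_add_one (s : ZMod 2) : chi (s + 1) = -chi s := by
  revert s; decide

lemma Psi_mul_Psi (F : (ℕ → ZMod 2) → ZMod 2) (i j : ℕ) :
    Psi F i * Psi F j = chi (F (bitZ i) + F (bitZ j)) :=
  (chi_add _ _).symm

lemma chi_cancel {X Y : ZMod 2 → ZMod 2} {u : ZMod 2} (hX : X 1 = X 0 + 1 + u)
    (hY : ∀ d, Y d = X d + u) : chi (X 0) + chi (Y 0) + (chi (X 1) + chi (Y 1)) = 0 := by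
  rw [hY, hY, hX]
  clear hX hY
  generalize X 0 = p
  revert p u
  decide

lemma rho_congr {N : ℕ} {a b : ℕ → ℤ} (h : ∀ k < N, a k = b k) (τ : ℕ) :
    rho N a τ = rho N b τ :=
  sum_congr rfl fun k hk => by
    rw [Finset.mem_range] at hk
    rw [h k (by omega), h (k + τ) (by omega)]

lemma rho_add_two {N τ : ℕ} (a : ℕ → ℤ) (hτ : τ ≤ N) :
    rho (N + 2) a τ = a 0 * a τ + rho N (fun k => a (k + 1)) τ + a (N + 1 - τ) * a (N + 1) := by
  rw [rho, show N + 2 - τ = N - τ + 1 + 1 by omega, sum_range_succ, sum_range_succ', rho,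
    show N - τ + 1 + τ = N + 1 by omega, show N - τ + 1 = N + 1 - τ by omega, zero_add]
  simp only [Nat.add_right_comm _ 1 τ]
  ring

section Golay

variable {r : ℕ} {σ : ℕ → ℕ}

def pathForm (r : ℕ) (σ : ℕ → ℕ) (x : ℕ → ZMod 2) : ZMod 2 :=
  ∑ α ∈ range (r - 1), x (σ α) * x (σ (α + 1))

def golayFn (r : ℕ) (σ : ℕ → ℕ) (c : ℕ → ZMod 2) (c₀ d : ZMod 2) (x : ℕ → ZMod 2) :
    ZMod 2 :=
  pathForm r σ x + ∑ i ∈ range r, c i * x i + c₀ + d * x (σ (r - 1))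

lemma pathForm_congr {x y : ℕ → ZMod 2} (h : ∀ α < r, x (σ α) = y (σ α)) :
    pathForm r σ x = pathForm r σ y :=
  sum_congr rfl fun α hα => by
    rw [Finset.mem_range] at hα
    rw [h α (by omega), h (α + 1) (by omega)]

lemma pathForm_one_sub (x : ℕ → ZMod 2) :
    pathForm r σ (1 - x)
      = pathForm r σ x + x (σ 0) + x (σ (r - 1)) + ((r - 1 : ℕ) : ZMod 2) := by
  have h : ∀ a b : ZMod 2, (1 - a) * (1 - b) = a * b + (b - a) + 1 := by decide
  simp only [pathForm, Pi.sub_apply, Pi.one_apply, h, sum_add_distrib,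
    sum_range_sub (fun α => x (σ α)), sum_const, card_range, nsmul_one]
  grind

lemma golayFn_one (c : ℕ → ZMod 2) (c₀ : ZMod 2) (x : ℕ → ZMod 2) :
    golayFn r σ c c₀ 1 x = golayFn r σ c c₀ 0 x + x (σ (r - 1)) := by
  simp [golayFn]

lemma pathForm_flip (hσ : Set.InjOn σ (Set.Iio r)) {u v : ℕ → ZMod 2} {α : ℕ} (hα : α + 1 < r)
    (hpivot : (u + v) (σ α) = 1) (habove : ∀ β, α < β → β < r → (u + v) (σ β) = 0) :
    pathForm r σ (u + Pi.single (σ (α + 1)) 1) + pathForm r σ (v + Pi.single (σ (α + 1)) 1)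
      = pathForm r σ u + pathForm r σ v + 1 := by
  set δ : ℕ → ZMod 2 := Pi.single (σ (α + 1)) 1
  have hδ : ∀ β < r, δ (σ β) = if β = α + 1 then 1 else 0 := fun β hβ => by
    simp only [δ, Pi.single_apply, hσ.eq_iff (Set.mem_Iio.2 hβ) (Set.mem_Iio.2 hα)]
  have polarize : ∀ p q, (u + δ) p * (u + δ) q + (v + δ) p * (v + δ) q
      = (u p * u q + v p * v q) + δ p * (u + v) q + δ q * (u + v) p := fun p q => by
    simp only [Pi.add_apply]
    grind
  have below : ∑ β ∈ range (r - 1), δ (σ β) * (u + v) (σ (β + 1)) = 0 := by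
    refine sum_eq_zero fun β hβ => ?_
    rw [Finset.mem_range] at hβ
    rw [hδ β (by omega)]
    split_ifs with h
    · rw [habove (β + 1) (by omega) (by omega), mul_zero]
    · rw [zero_mul]
  have above : ∑ β ∈ range (r - 1), δ (σ (β + 1)) * (u + v) (σ β) = 1 := by
    rw [sum_eq_single α, hδ _ hα, if_pos rfl, hpivot, one_mul]
    · intro β hβ hne
      rw [Finset.mem_range] at hβ
      rw [hδ _ (by omega), if_neg (by omega), zero_mul]
    · intro h; exact absurd (Finset.mem_range.2 (by omega)) h
  rw [pathForm, pathForm, pathForm, pathForm, ← sum_add_distrib,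
    sum_congr rfl fun β _ => polarize _ _, sum_add_distrib, sum_add_distrib, sum_add_distrib,
    below, above, add_zero]

lemma golayFn_flip (hσ : Set.InjOn σ (Set.Iio r)) (c : ℕ → ZMod 2) (c₀ d : ZMod 2)
    {u v : ℕ → ZMod 2} {α : ℕ} (hα : α + 1 < r)
    (hpivot : (u + v) (σ α) = 1) (habove : ∀ β, α < β → β < r → (u + v) (σ β) = 0) :
    golayFn r σ c c₀ d (u + Pi.single (σ (α + 1)) 1)
        + golayFn r σ c c₀ d (v + Pi.single (σ (α + 1)) 1)
      = golayFn r σ c c₀ d u + golayFn r σ c c₀ d v + 1 := by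
  have hP := pathForm_flip hσ hα hpivot habove
  simp only [golayFn, Pi.add_apply, mul_add, sum_add_distrib]
  grind

def pivot (r : ℕ) (σ : ℕ → ℕ) (D : ℕ) : ℕ := Nat.findGreatest (fun α => D.testBit (σ α)) (r - 1)

lemma pivot_spec (hσ : Set.SurjOn σ (Set.Iio r) (Set.Iio r)) {D : ℕ} (hD : D ≠ 0)
    (hDr : D < 2 ^ r) (hend : D.testBit (σ (r - 1)) = false) :
    pivot r σ D + 1 < r ∧ D.testBit (σ (pivot r σ D)) ∧
      ∀ β, pivot r σ D < β → β < r → D.testBit (σ β) = false := by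
  obtain ⟨j, hj, hDj⟩ := Nat.exists_lt_testBit_of_ne_zero_of_lt_two_pow hD hDr
  obtain ⟨α, hα, rfl⟩ := hσ (Set.mem_Iio.2 hj)
  have hα' : α ≤ r - 1 := by rw [Set.mem_Iio] at hα; omega
  have hle : pivot r σ D ≤ r - 1 := Nat.findGreatest_le _
  have hspec : D.testBit (σ (pivot r σ D)) :=
    Nat.findGreatest_spec (P := fun α => D.testBit (σ α)) hα' hDj
  have hne : pivot r σ D ≠ r - 1 := fun h => by simp [h, hend] at hspec
  refine ⟨by omega, hspec, fun β hβ hβr => ?_⟩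
  simpa using Nat.findGreatest_is_greatest hβ (show β ≤ r - 1 by omega)

variable (r σ) in
def golayPartner (τ t : ℕ) : ℕ :=
  if (t ^^^ (t + τ)).testBit (σ (r - 1)) then t
  else t ^^^ 2 ^ σ (pivot r σ (t ^^^ (t + τ)) + 1)

variable {τ t : ℕ}

lemma pivot_spec_xor (hσ : Set.SurjOn σ (Set.Iio r) (Set.Iio r)) (hτ : 1 ≤ τ) (ht : t + τ < 2 ^ r)
    (hend : (t ^^^ (t + τ)).testBit (σ (r - 1)) = false) :
    pivot r σ (t ^^^ (t + τ)) + 1 < r ∧ (t ^^^ (t + τ)).testBit (σ (pivot r σ (t ^^^ (t + τ)))) ∧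
      ∀ β, pivot r σ (t ^^^ (t + τ)) < β → β < r → (t ^^^ (t + τ)).testBit (σ β) = false :=
  pivot_spec hσ (Nat.xor_ne_zero_iff.2 (by omega)) (Nat.xor_lt_two_pow (by omega) ht) hend

lemma golayPartner_add (hσ : Set.SurjOn σ (Set.Iio r) (Set.Iio r)) (hτ : 1 ≤ τ)
    (ht : t + τ < 2 ^ r) (hend : (t ^^^ (t + τ)).testBit (σ (r - 1)) = false) :
    golayPartner r σ τ t + τ = (t + τ) ^^^ 2 ^ σ (pivot r σ (t ^^^ (t + τ)) + 1) := by
  obtain ⟨hα, -, habove⟩ := pivot_spec_xor hσ hτ ht hend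
  have hb := habove _ (Nat.lt_succ_self _) hα
  rw [Nat.testBit_xor, bne_eq_false_iff_eq] at hb
  rw [golayPartner, if_neg (by simp [hend]), Nat.xor_two_pow_add_of_testBit_eq hb]

lemma xor_golayPartner_add (hσ : Set.SurjOn σ (Set.Iio r) (Set.Iio r)) (hτ : 1 ≤ τ)
    (ht : t + τ < 2 ^ r) :
    golayPartner r σ τ t ^^^ (golayPartner r σ τ t + τ) = t ^^^ (t + τ) := by
  by_cases hend : (t ^^^ (t + τ)).testBit (σ (r - 1))
  · rw [golayPartner, if_pos hend]
  · rw [Bool.not_eq_true] at hend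
    rw [golayPartner_add hσ hτ ht hend, golayPartner, if_neg (by simp [hend])]
    apply Nat.eq_of_testBit_eq
    intro j
    simp only [Nat.testBit_xor]
    cases t.testBit j <;> cases (t + τ).testBit j <;> simp

lemma golayPartner_add_lt (hσ : Set.BijOn σ (Set.Iio r) (Set.Iio r)) (hτ : 1 ≤ τ)
    (ht : t + τ < 2 ^ r) : golayPartner r σ τ t + τ < 2 ^ r := by
  by_cases hend : (t ^^^ (t + τ)).testBit (σ (r - 1))
  · rwa [golayPartner, if_pos hend]
  · rw [Bool.not_eq_true] at hend
    have hb := hσ.mapsTo (Set.mem_Iio.2 (pivot_spec_xor hσ.surjOn hτ ht hend).1)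
    rw [golayPartner_add hσ.surjOn hτ ht hend]
    exact Nat.xor_lt_two_pow ht (Nat.pow_lt_pow_right one_lt_two hb)

lemma golayPartner_golayPartner (hσ : Set.SurjOn σ (Set.Iio r) (Set.Iio r)) (hτ : 1 ≤ τ)
    (ht : t + τ < 2 ^ r) : golayPartner r σ τ (golayPartner r σ τ t) = t := by
  have hD := xor_golayPartner_add hσ hτ ht
  conv_lhs => rw [golayPartner, hD]
  by_cases hend : (t ^^^ (t + τ)).testBit (σ (r - 1))
  · rw [if_pos hend, golayPartner, if_pos hend]
  · rw [if_neg hend, golayPartner, if_neg hend, Nat.xor_xor_cancel_right]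

lemma golayPartner_ne (hend : (t ^^^ (t + τ)).testBit (σ (r - 1)) = false) :
    golayPartner r σ τ t ≠ t := by
  rw [golayPartner, if_neg (by simp [hend])]
  intro h
  have := Nat.xor_right_inj.1 (h.trans (Nat.xor_zero t).symm)
  exact (Nat.two_pow_pos _).ne' this

lemma golayFn_golayPartner (hσ : Set.BijOn σ (Set.Iio r) (Set.Iio r)) (c : ℕ → ZMod 2)
    (c₀ d : ZMod 2) (hτ : 1 ≤ τ) (ht : t + τ < 2 ^ r)
    (hend : (t ^^^ (t + τ)).testBit (σ (r - 1)) = false) :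
    golayFn r σ c c₀ d (bitZ (golayPartner r σ τ t))
        + golayFn r σ c c₀ d (bitZ (golayPartner r σ τ t + τ))
      = golayFn r σ c c₀ d (bitZ t) + golayFn r σ c c₀ d (bitZ (t + τ)) + 1 := by
  obtain ⟨hα, hpivot, habove⟩ := pivot_spec_xor hσ.surjOn hτ ht hend
  have hbit : ∀ j, (bitZ t + bitZ (t + τ)) j = ((t ^^^ (t + τ)).testBit j).toNat := fun j => by
    rw [← bitZ_xor, bitZ_eq_toNat_testBit]
  rw [golayPartner_add hσ.surjOn hτ ht hend, golayPartner, if_neg (by simp [hend]), bitZ_xor,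
    bitZ_xor, bitZ_two_pow]
  refine golayFn_flip hσ.injOn c c₀ d hα ?_ fun β hβ hβr => ?_
  · rw [hbit, hpivot]; rfl
  · rw [hbit, habove β hβ hβr]; rfl

theorem rho_golayFn_add_rho_golayFn (hσ : Set.BijOn σ (Set.Iio r) (Set.Iio r))
    (c : ℕ → ZMod 2) (c₀ : ZMod 2) (hτ : 1 ≤ τ) :
    rho (2 ^ r) (Psi (golayFn r σ c c₀ 0)) τ + rho (2 ^ r) (Psi (golayFn r σ c c₀ 1)) τ = 0 := by
  set X : ℕ → ZMod 2 := fun t => golayFn r σ c c₀ 0 (bitZ t) + golayFn r σ c c₀ 0 (bitZ (t + τ))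
  have hterm : ∀ t, Psi (golayFn r σ c c₀ 0) t * Psi (golayFn r σ c c₀ 0) (t + τ)
      + Psi (golayFn r σ c c₀ 1) t * Psi (golayFn r σ c c₀ 1) (t + τ)
      = chi (X t) + chi (X t + bitZ (t ^^^ (t + τ)) (σ (r - 1))) := fun t => by
    rw [Psi_mul_Psi, Psi_mul_Psi, golayFn_one, golayFn_one, bitZ_xor, Pi.add_apply]
    simp only [X, add_assoc, add_left_comm]
  have hend_one : ∀ t, (t ^^^ (t + τ)).testBit (σ (r - 1)) →
      chi (X t) + chi (X t + bitZ (t ^^^ (t + τ)) (σ (r - 1))) = 0 := fun t hend => by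
    rw [bitZ_eq_toNat_testBit, hend, Bool.toNat_true, Nat.cast_one, chi_add_one, add_neg_cancel]
  rw [rho, rho, ← sum_add_distrib, sum_congr rfl fun t _ => hterm t]
  refine sum_involution (fun t _ => golayPartner r σ τ t) (fun t ht => ?_) (fun t ht => ?_)
    (fun t ht => ?_) (fun t ht => ?_)
  all_goals rw [Finset.mem_range, Nat.lt_sub_iff_add_lt] at ht
  · by_cases hend : (t ^^^ (t + τ)).testBit (σ (r - 1))
    · rw [golayPartner, if_pos hend, hend_one t hend, add_zero]
    · rw [Bool.not_eq_true] at hend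
      simp only [X]
      rw [xor_golayPartner_add hσ.surjOn hτ ht, golayFn_golayPartner hσ c c₀ 0 hτ ht hend,
        bitZ_eq_toNat_testBit, hend, Bool.toNat_false, Nat.cast_zero, add_zero, add_zero,
        chi_add_one]
      ring
  · intro hne
    by_cases hend : (t ^^^ (t + τ)).testBit (σ (r - 1))
    · exact absurd (hend_one t hend) hne
    · exact golayPartner_ne (Bool.not_eq_true _ ▸ hend)
  · rw [Finset.mem_range, Nat.lt_sub_iff_add_lt]
    exact golayPartner_add_lt hσ hτ ht
  · exact golayPartner_golayPartner hσ.surjOn hτ ht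

end Golay

section Construction

def consPath (v : ℕ) (π : ℕ → ℕ) : ℕ → ℕ
  | 0 => v
  | α + 1 => π α

lemma bijOn_consPath {n : ℕ} {π : ℕ → ℕ} (hπ : Set.BijOn π (Set.Iio n) (Set.Iio n)) :
    Set.BijOn (consPath n π) (Set.Iio (n + 1)) (Set.Iio (n + 1)) := by
  have hπlt : ∀ α < n, π α < n := fun α hα => hπ.mapsTo (Set.mem_Iio.2 hα)
  have hmaps : Set.MapsTo (consPath n π) (Set.Iio (n + 1)) (Set.Iio (n + 1)) := by
    rintro (_ | α) hα <;> simp only [Set.mem_Iio, consPath] at hα ⊢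
    · omega
    · have := hπlt α (by omega); omega
  refine ((Set.finite_Iio _).injOn_iff_bijOn_of_mapsTo hmaps).1 ?_
  rintro (_ | α) hα (_ | β) hβ h <;> simp only [Set.mem_Iio, consPath] at hα hβ h
  · rfl
  · have := hπlt β (by omega); omega
  · have := hπlt α (by omega); omega
  · rw [hπ.injOn (Set.mem_Iio.2 (by omega)) (Set.mem_Iio.2 (by omega)) h]

lemma pathForm_consPath {n : ℕ} (hn : 1 ≤ n) (v : ℕ) (π : ℕ → ℕ) (y : ℕ → ZMod 2) :
    pathForm (n + 1) (consPath v π) y = y v * y (π 0) + pathForm n π y := by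
  obtain ⟨k, rfl⟩ : ∃ k, n = k + 1 := ⟨n - 1, by omega⟩
  rw [pathForm, Nat.add_sub_cancel, sum_range_succ', add_comm]
  rfl

lemma zeta_eq_pathForm (m : ℕ) (π : ℕ → ℕ) (d : ZMod 2) (x : ℕ → ZMod 2) :
    zeta m π d x = pathForm (m - 2) π x + d * x (π (m - 3)) :=
  rfl

lemma eta_eq_pathForm (m : ℕ) (π : ℕ → ℕ) (d : ZMod 2) (x : ℕ → ZMod 2) :
    eta m π d x = pathForm (m - 2) π (1 - x) + (1 - d) * x (π (m - 3)) :=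
  rfl

def affinePart (m : ℕ) (e f x : ℕ → ZMod 2) : ZMod 2 :=
  ∑ i ∈ range (m - 2), e i * x i + ∑ i ∈ range (m - 2), f i * (1 - x i)

lemma affinePart_congr {m : ℕ} (e f : ℕ → ZMod 2) {x y : ℕ → ZMod 2}
    (h : ∀ j < m - 2, x j = y j) : affinePart m e f x = affinePart m e f y := by
  rw [affinePart, affinePart]
  congr 1 <;> exact sum_congr rfl fun i hi => by rw [h i (Finset.mem_range.1 hi)]

lemma affinePart_add_affinePart_of_complement {m : ℕ} (e f : ℕ → ZMod 2) {x y : ℕ → ZMod 2}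
    (h : ∀ j < m - 2, y j = 1 - x j) :
    affinePart m e f x + affinePart m e f y
      = ∑ i ∈ range (m - 2), e i + ∑ i ∈ range (m - 2), f i := by
  rw [affinePart, affinePart, add_add_add_comm, ← sum_add_distrib, ← sum_add_distrib]
  congr 1 <;> refine sum_congr rfl fun i hi => ?_ <;> rw [h i (Finset.mem_range.1 hi)] <;> ring

/-- The coefficient of `y (m - 2)` comes from `ζ^d + η^d = x_{π 0} + (m - 3)`. -/
def linearCoeff (m : ℕ) (e f : ℕ → ZMod 2) (i : ℕ) : ZMod 2 :=
  if i = m - 2 then ((m - 3 : ℕ) : ZMod 2) else e i - f i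

lemma sum_linearCoeff_mul {m : ℕ} (hm : 2 ≤ m) (e f y : ℕ → ZMod 2) :
    ∑ i ∈ range (m - 1), linearCoeff m e f i * y i + ∑ i ∈ range (m - 2), f i
      = affinePart m e f y + ((m - 3 : ℕ) : ZMod 2) * y (m - 2) := by
  rw [show m - 1 = m - 2 + 1 by omega, sum_range_succ, linearCoeff, if_pos rfl,
    sum_congr rfl fun i hi => by rw [linearCoeff, if_neg (Finset.mem_range.1 hi).ne], affinePart]
  simp only [mul_sub, sub_mul, mul_one, sum_sub_distrib]
  ring

variable {m : ℕ} {π : ℕ → ℕ}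

lemma gbf_apply (e f : ℕ → ZMod 2) (d : ZMod 2) (x : ℕ → ZMod 2) :
    gbf m π e f d x = x (m - 2) * (1 - x (m - 1)) * zeta m π d x
      + (1 - x (m - 2)) * x (m - 1) * eta m π d x + d * (1 - x (m - 2)) * (1 - x (m - 1))
      + x (m - 2) * x (m - 1) + affinePart m e f x := by
  rw [gbf, affinePart, add_assoc]

lemma gbf_eq_golayFn (hm : 3 ≤ m) (hπ : Set.MapsTo π (Set.Iio (m - 2)) (Set.Iio (m - 2)))
    (e f : ℕ → ZMod 2) (d : ZMod 2) {x y : ℕ → ZMod 2} (hlow : ∀ j < m - 2, x j = y j)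
    (hx₂ : x (m - 2) = 1 + y (m - 2)) (hx₁ : x (m - 1) = y (m - 2)) :
    gbf m π e f d x = golayFn (m - 1) (consPath (m - 2) π) (linearCoeff m e f)
      (∑ i ∈ range (m - 2), f i) d y := by
  have hπx : ∀ α < m - 2, x (π α) = y (π α) := fun α hα => hlow _ (hπ (Set.mem_Iio.2 hα))
  have hπx' : ∀ α < m - 2, (1 - x) (π α) = (1 - y) (π α) := fun α hα => by
    simp only [Pi.sub_apply, hπx α hα]
  have hG : golayFn (m - 1) (consPath (m - 2) π) (linearCoeff m e f) (∑ i ∈ range (m - 2), f i) d y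
      = y (m - 2) * y (π 0) + pathForm (m - 2) π y
        + (affinePart m e f y + ((m - 3 : ℕ) : ZMod 2) * y (m - 2)) + d * y (π (m - 3)) := by
    rw [← sum_linearCoeff_mul (by omega), golayFn, show m - 1 = m - 2 + 1 by omega,
      pathForm_consPath (by omega), Nat.add_sub_cancel, show m - 2 = m - 3 + 1 by omega]
    simp only [consPath]
    ring
  rw [hG, gbf_apply, zeta_eq_pathForm, eta_eq_pathForm, pathForm_congr hπx, pathForm_congr hπx',
    pathForm_one_sub, hx₂, hx₁, hπx _ (by omega), affinePart_congr e f hlow,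
    show m - 2 - 1 = m - 3 by omega]
  rcases (by decide : ∀ c : ZMod 2, c = 0 ∨ c = 1) (y (m - 2)) with hc | hc <;> rw [hc] <;> grind

lemma gbf_two_pow_add (hm : 3 ≤ m) (hπ : Set.MapsTo π (Set.Iio (m - 2)) (Set.Iio (m - 2)))
    (e f : ℕ → ZMod 2) (d : ZMod 2) {t : ℕ} (ht : t < 2 ^ (m - 1)) :
    gbf m π e f d (bitZ (2 ^ (m - 2) + t))
      = golayFn (m - 1) (consPath (m - 2) π) (linearCoeff m e f) (∑ i ∈ range (m - 2), f i) d
          (bitZ t) := by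
  obtain ⟨q, z, hq, hz, rfl⟩ : ∃ q z, q < 2 ∧ z < 2 ^ (m - 2) ∧ t = 2 ^ (m - 2) * q + z :=
    ⟨t / 2 ^ (m - 2), t % 2 ^ (m - 2), Nat.div_lt_of_lt_mul <| by
      rwa [← pow_succ, show m - 2 + 1 = m - 1 by omega], Nat.mod_lt _ (Nat.two_pow_pos _),
      (Nat.div_add_mod t _).symm⟩
  rw [show 2 ^ (m - 2) + (2 ^ (m - 2) * q + z) = 2 ^ (m - 2) * (q + 1) + z by ring]
  apply gbf_eq_golayFn hm hπ e f d
  · intro j hj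
    rw [bitZ_two_pow_mul_add_of_lt hz _ hj, bitZ_two_pow_mul_add_of_lt hz _ hj]
  · rw [bitZ_two_pow_mul_add_self hz, bitZ_two_pow_mul_add_self hz]
    interval_cases q <;> decide
  · rw [show m - 1 = m - 2 + 1 by omega, bitZ_two_pow_mul_add_succ hz,
      bitZ_two_pow_mul_add_self hz]
    interval_cases q <;> decide

lemma gbf_of_high_zero_zero (e f : ℕ → ZMod 2) (d : ZMod 2) {x : ℕ → ZMod 2}
    (h₂ : x (m - 2) = 0) (h₁ : x (m - 1) = 0) : gbf m π e f d x = d + affinePart m e f x := by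
  rw [gbf_apply, h₂, h₁]; ring

lemma gbf_of_high_one_zero (e f : ℕ → ZMod 2) (d : ZMod 2) {x : ℕ → ZMod 2}
    (h₂ : x (m - 2) = 1) (h₁ : x (m - 1) = 0) :
    gbf m π e f d x = zeta m π d x + affinePart m e f x := by
  rw [gbf_apply, h₂, h₁]; ring

lemma gbf_of_high_zero_one (e f : ℕ → ZMod 2) (d : ZMod 2) {x : ℕ → ZMod 2}
    (h₂ : x (m - 2) = 0) (h₁ : x (m - 1) = 1) :
    gbf m π e f d x = eta m π d x + affinePart m e f x := by
  rw [gbf_apply, h₂, h₁]; ring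

lemma gbf_of_high_one_one (e f : ℕ → ZMod 2) (d : ZMod 2) {x : ℕ → ZMod 2}
    (h₂ : x (m - 2) = 1) (h₁ : x (m - 1) = 1) : gbf m π e f d x = 1 + affinePart m e f x := by
  rw [gbf_apply, h₂, h₁]; ring

lemma PsiT_gbf_boundary (hm : 3 ≤ m) (hπ : Set.MapsTo π (Set.Iio (m - 2)) (Set.Iio (m - 2)))
    (e f : ℕ → ZMod 2) {τ : ℕ} (hτ₁ : 1 ≤ τ) (hτ₂ : τ ≤ 2 ^ (m - 2)) :
    PsiT (gbf m π e f 0) (2 ^ (m - 2) - 1) 0 * PsiT (gbf m π e f 0) (2 ^ (m - 2) - 1) τ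
      + PsiT (gbf m π e f 0) (2 ^ (m - 2) - 1) (2 ^ (m - 1) + 1 - τ)
        * PsiT (gbf m π e f 0) (2 ^ (m - 2) - 1) (2 ^ (m - 1) + 1)
      + (PsiT (gbf m π e f 1) (2 ^ (m - 2) - 1) 0 * PsiT (gbf m π e f 1) (2 ^ (m - 2) - 1) τ
        + PsiT (gbf m π e f 1) (2 ^ (m - 2) - 1) (2 ^ (m - 1) + 1 - τ)
          * PsiT (gbf m π e f 1) (2 ^ (m - 2) - 1) (2 ^ (m - 1) + 1)) = 0 := by
  obtain ⟨w, hw, rfl⟩ : ∃ w, w < 2 ^ (m - 2) ∧ τ = w + 1 := ⟨τ - 1, by omega, by omega⟩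
  have hpow : 2 ^ (m - 1) = 2 ^ (m - 2) * 2 := by rw [← pow_succ]; congr 1; omega
  have h0 : (0 : ℕ) < 2 ^ (m - 2) := Nat.two_pow_pos _
  have h0' : 2 ^ (m - 2) - 1 - 0 < 2 ^ (m - 2) := by omega
  have hw' : 2 ^ (m - 2) - 1 - w < 2 ^ (m - 2) := by omega
  have hm1 : m - 1 = m - 2 + 1 := by omega
  -- the four indices, written as `2 ^ (m - 2) * q + z` with `z < 2 ^ (m - 2)` to read off bits
  simp only [PsiT, Psi_mul_Psi,
    show 2 ^ (m - 2) - 1 + 0 = 2 ^ (m - 2) * 0 + (2 ^ (m - 2) - 1 - 0) by omega,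
    show 2 ^ (m - 2) - 1 + (w + 1) = 2 ^ (m - 2) * 1 + w by omega,
    show 2 ^ (m - 2) - 1 + (2 ^ (m - 1) + 1 - (w + 1))
      = 2 ^ (m - 2) * 2 + (2 ^ (m - 2) - 1 - w) by omega,
    show 2 ^ (m - 2) - 1 + (2 ^ (m - 1) + 1) = 2 ^ (m - 2) * 3 + 0 by omega]
  set xA := bitZ (2 ^ (m - 2) * 0 + (2 ^ (m - 2) - 1 - 0))
  set xB := bitZ (2 ^ (m - 2) * 1 + w)
  set xC := bitZ (2 ^ (m - 2) * 2 + (2 ^ (m - 2) - 1 - w))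
  set xD := bitZ (2 ^ (m - 2) * 3 + 0)
  have hAD : ∀ j < m - 2, xA j = 1 - xD j := fun j hj => by
    simp only [xA, xD, bitZ_two_pow_mul_add_of_lt h0' _ hj, bitZ_two_pow_mul_add_of_lt h0 _ hj,
      bitZ_two_pow_sub_one_sub h0 hj]
  have hBC : ∀ j < m - 2, xC j = 1 - xB j := fun j hj => by
    simp only [xB, xC, bitZ_two_pow_mul_add_of_lt hw _ hj, bitZ_two_pow_mul_add_of_lt hw' _ hj,
      bitZ_two_pow_sub_one_sub hw hj]
  have hπB : ∀ α < m - 2, (1 - xC) (π α) = xB (π α) := fun α hα => by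
    rw [Pi.sub_apply, hBC _ (hπ (Set.mem_Iio.2 hα)), Pi.one_apply, sub_sub_cancel]
  have hA := fun d => gbf_of_high_zero_zero (π := π) e f d (x := xA)
    ((bitZ_two_pow_mul_add_self h0' 0).trans (by decide : bitZ 0 0 = 0))
    (hm1 ▸ (bitZ_two_pow_mul_add_succ h0' 0).trans (by decide : bitZ 0 1 = 0))
  have hB := fun d => gbf_of_high_one_zero (π := π) e f d (x := xB)
    ((bitZ_two_pow_mul_add_self hw 1).trans (by decide : bitZ 1 0 = 1))
    (hm1 ▸ (bitZ_two_pow_mul_add_succ hw 1).trans (by decide : bitZ 1 1 = 0))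
  have hC := fun d => gbf_of_high_zero_one (π := π) e f d (x := xC)
    ((bitZ_two_pow_mul_add_self hw' 2).trans (by decide : bitZ 2 0 = 0))
    (hm1 ▸ (bitZ_two_pow_mul_add_succ hw' 2).trans (by decide : bitZ 2 1 = 1))
  have hD := fun d => gbf_of_high_one_one (π := π) e f d (x := xD)
    ((bitZ_two_pow_mul_add_self h0 3).trans (by decide : bitZ 3 0 = 1))
    (hm1 ▸ (bitZ_two_pow_mul_add_succ h0 3).trans (by decide : bitZ 3 1 = 1))
  have hLAD := affinePart_add_affinePart_of_complement e f hAD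
  have hLBC := affinePart_add_affinePart_of_complement e f hBC
  have hCe := hBC _ (hπ (Set.mem_Iio.2 (show m - 3 < m - 2 by omega)))
  refine chi_cancel (X := fun d => gbf m π e f d xA + gbf m π e f d xB)
    (Y := fun d => gbf m π e f d xC + gbf m π e f d xD) (u := xB (π (m - 3))) ?_ fun d => ?_
  · simp only [hA, hB, zeta_eq_pathForm]
    grind
  · simp only [hA, hB, hC, hD, zeta_eq_pathForm, eta_eq_pathForm, pathForm_congr hπB, hCe]
    grind

end Construction

/-- For the constructed truncated pair of length `N = 2^{m-1}+2`,
the aperiodic autocorrelation sum vanishes for all `1 ≤ τ ≤ 2^{m-2}`. -/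
theorem ebzcp_zcz_first_zone (m : ℕ) (hm : 4 ≤ m) (π : ℕ → ℕ)
    (hπ : Set.BijOn π (Set.Iio (m - 2)) (Set.Iio (m - 2)))
    (e f : ℕ → ZMod 2)
    (N : ℕ) (hN : N = 2 ^ (m - 1) + 2)
    (a b : ℕ → ℤ)
    (ha : a = PsiT (gbf m π e f 0) (2 ^ (m - 2) - 1))
    (hb : b = PsiT (gbf m π e f 1) (2 ^ (m - 2) - 1)) :
    ∀ τ : ℕ, 1 ≤ τ → τ ≤ 2 ^ (m - 2) →
      rho N a τ + rho N b τ = 0 := by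
  intro τ hτ₁ hτ₂
  subst hN ha hb
  have hτN : τ ≤ 2 ^ (m - 1) := hτ₂.trans (Nat.pow_le_pow_right two_pos (by omega))
  have hinner : ∀ d, rho (2 ^ (m - 1)) (fun k => PsiT (gbf m π e f d) (2 ^ (m - 2) - 1) (k + 1)) τ
      = rho (2 ^ (m - 1)) (Psi (golayFn (m - 1) (consPath (m - 2) π) (linearCoeff m e f)
          (∑ i ∈ range (m - 2), f i) d)) τ := fun d =>
    rho_congr (fun k hk => by
      rw [PsiT, Psi, show 2 ^ (m - 2) - 1 + (k + 1) = 2 ^ (m - 2) + k by omega,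
        gbf_two_pow_add (by omega) hπ.mapsTo e f d hk]
      rfl) τ
  have hσ : Set.BijOn (consPath (m - 2) π) (Set.Iio (m - 1)) (Set.Iio (m - 1)) := by
    rw [show m - 1 = m - 2 + 1 by omega]; exact bijOn_consPath hπ
  rw [rho_add_two _ hτN, rho_add_two _ hτN, hinner, hinner]
  linear_combination
    rho_golayFn_add_rho_golayFn hσ (linearCoeff m e f) (∑ i ∈ range (m - 2), f i) hτ₁
      + PsiT_gbf_boundary (by omega) hπ.mapsTo e f hτ₁ hτ₂
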